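/- Let n ≥ 3 and let a_0, …, a_n be pairwise coprime positive integers with a_j ≥ 2 for at least one index j. Define Θ := max over subsets I ⊆ {0,…,n} with |I| ≥ 4 of (1/∏_{i∉I} a_i) · ((∑_{i∈I} a_i)/(∏_{i∈I} a_i) + (|I| − 3)). Then Θ ≤ (3n)/2 − 1. -/

import Mathlib

lemma key_sum_prod {ι : Type*} [DecidableEq ι] (f : ι → ℕ) :
    ∀ (I : Finset ι), (∀ i ∈ I, 1 ≤ f i) → (∃ j ∈ I, 2 ≤ f j) →
      2 * ∑ i ∈ I, f i ≤ (I.card + 1) * ∏ i ∈ I, f i := by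
  intro I
  induction I using Finset.induction_on with
  | empty => intro _ h; simp at h
  | @insert x s hx ih =>
    intro h1 hbig
    rw [Finset.sum_insert hx, Finset.prod_insert hx, Finset.card_insert_of_notMem hx]
    have hfx : 1 ≤ f x := h1 x (Finset.mem_insert_self x s)
    by_cases h : ∃ j ∈ s, 2 ≤ f j
    · obtain ⟨j, hjm, hj2⟩ := h
      have hP : 2 ≤ ∏ i ∈ s, f i :=
        le_trans hj2 (Finset.single_le_prod' (fun i hi => h1 i (Finset.mem_insert_of_mem hi)) hjm)
      have hih := ih (fun i hi => h1 i (Finset.mem_insert_of_mem hi)) ⟨j, hjm, hj2⟩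
      have h3 : f x * 2 ≤ f x * ∏ i ∈ s, f i := Nat.mul_le_mul_left (f x) hP
      have h4 : (s.card + 1) * (∏ i ∈ s, f i) * 1 ≤ (s.card + 1) * (∏ i ∈ s, f i) * f x :=
        Nat.mul_le_mul_left _ hfx
      nlinarith [hih, h3, h4]
    · have hone : ∀ i ∈ s, f i = 1 := by
        intro i hi
        have := h1 i (Finset.mem_insert_of_mem hi)
        have : ¬ 2 ≤ f i := fun hc => h ⟨i, hi, hc⟩
        omega
      have hsum : ∑ i ∈ s, f i = s.card := by
        rw [Finset.sum_congr rfl hone]; simp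
      have hprod : ∏ i ∈ s, f i = 1 := Finset.prod_eq_one hone
      obtain ⟨j, hjm, hj2⟩ := hbig
      rcases Finset.mem_insert.mp hjm with h' | h'
      · subst h'
        rw [hsum, hprod]
        nlinarith [hj2, Nat.zero_le s.card]
      · exact absurd ⟨j, h', hj2⟩ h

theorem stmt_4 (n : ℕ) (hn : 3 ≤ n) (a : Fin (n + 1) → ℕ)
    (hpos : ∀ i, 0 < a i)
    (hcop : ∀ i j, i ≠ j → Nat.Coprime (a i) (a j))
    (hbig : ∃ j, 2 ≤ a j) :
    (Finset.filter (fun I : Finset (Fin (n + 1)) => 4 ≤ I.card) Finset.univ).sup'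
      ⟨Finset.univ, by
        simp only [Finset.mem_filter, Finset.mem_univ, true_and, Finset.card_univ,
          Fintype.card_fin]
        omega⟩
      (fun I =>
        (1 / ∏ i ∈ Iᶜ, (a i : ℚ)) *
          ((∑ i ∈ I, (a i : ℚ)) / (∏ i ∈ I, (a i : ℚ)) + ((I.card : ℚ) - 3)))
      ≤ 3 * (n : ℚ) / 2 - 1 := by
  apply Finset.sup'_le
  intro I hI
  simp only [Finset.mem_filter, Finset.mem_univ, true_and] at hI
  have hpos1 : ∀ i : Fin (n+1), (1:ℚ) ≤ (a i : ℚ) := by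
    intro i; exact_mod_cast hpos i
  have hmpos : (0:ℚ) < ∏ i ∈ Iᶜ, (a i : ℚ) := by
    apply Finset.prod_pos; intro i _; exact_mod_cast hpos i
  have hPpos : (0:ℚ) < ∏ i ∈ I, (a i : ℚ) := by
    apply Finset.prod_pos; intro i _; exact_mod_cast hpos i
  have hInonempty : I.Nonempty := Finset.card_pos.mp (by omega)
  have hSpos : (0:ℚ) < ∑ i ∈ I, (a i : ℚ) := by
    apply Finset.sum_pos (fun i _ => by exact_mod_cast hpos i) hInonempty
  have hkQ4 : (4:ℚ) ≤ (I.card : ℚ) := by exact_mod_cast hI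
  have hkn : I.card ≤ n + 1 := le_trans (Finset.card_le_univ I) (by simp)
  have hknQ : (I.card : ℚ) ≤ (n : ℚ) + 1 := by exact_mod_cast hkn
  have hnQ : (3:ℚ) ≤ (n : ℚ) := by exact_mod_cast hn
  obtain ⟨j, hj⟩ := hbig
  by_cases hjI : j ∈ I
  · -- key lemma case
    have hkey : 2 * ∑ i ∈ I, a i ≤ (I.card + 1) * ∏ i ∈ I, a i :=
      key_sum_prod a I (fun i _ => hpos i) ⟨j, hjI, hj⟩
    have hkeyQ : 2 * ∑ i ∈ I, (a i : ℚ) ≤ ((I.card : ℚ) + 1) * ∏ i ∈ I, (a i : ℚ) := by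
      exact_mod_cast hkey
    have hdiv : (∑ i ∈ I, (a i : ℚ)) / (∏ i ∈ I, (a i : ℚ)) ≤ ((I.card : ℚ) + 1) / 2 := by
      rw [div_le_div_iff₀ hPpos (by norm_num : (0:ℚ) < 2)]
      linarith
    have hm1 : (1:ℚ) ≤ ∏ i ∈ Iᶜ, (a i : ℚ) := by
      have h : 1 ≤ ∏ i ∈ Iᶜ, a i := Finset.one_le_prod' fun i _ => hpos i
      exact_mod_cast h
    have h1m : 1 / (∏ i ∈ Iᶜ, (a i : ℚ)) ≤ 1 := by
      rw [div_le_one hmpos]; exact hm1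
    have hinnerpos : (0:ℚ) ≤ (∑ i ∈ I, (a i : ℚ)) / (∏ i ∈ I, (a i : ℚ)) + ((I.card : ℚ) - 3) := by
      have := div_pos hSpos hPpos
      linarith
    calc (1 / ∏ i ∈ Iᶜ, (a i : ℚ)) *
          ((∑ i ∈ I, (a i : ℚ)) / (∏ i ∈ I, (a i : ℚ)) + ((I.card : ℚ) - 3))
        ≤ 1 * ((∑ i ∈ I, (a i : ℚ)) / (∏ i ∈ I, (a i : ℚ)) + ((I.card : ℚ) - 3)) :=
          mul_le_mul_of_nonneg_right h1m hinnerpos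
      _ ≤ 3 * (n : ℚ) / 2 - 1 := by
          rw [one_mul]; linarith
  · -- j ∈ Iᶜ, so the outside product is ≥ 2
    have hjIc : j ∈ Iᶜ := Finset.mem_compl.mpr hjI
    have hm2 : (2:ℚ) ≤ ∏ i ∈ Iᶜ, (a i : ℚ) := by
      have h : 2 ≤ ∏ i ∈ Iᶜ, a i :=
        le_trans hj (Finset.single_le_prod' (fun i _ => hpos i) hjIc)
      exact_mod_cast h
    have hSP : (∑ i ∈ I, (a i : ℚ)) / (∏ i ∈ I, (a i : ℚ)) ≤ (I.card : ℚ) := by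
      rw [div_le_iff₀ hPpos]
      have h : ∑ i ∈ I, a i ≤ I.card * ∏ i ∈ I, a i := by
        calc ∑ i ∈ I, a i ≤ ∑ _i ∈ I, ∏ k ∈ I, a k :=
              Finset.sum_le_sum (fun i hi => Finset.single_le_prod' (fun k _ => hpos k) hi)
          _ = I.card * ∏ i ∈ I, a i := by
              rw [Finset.sum_const, smul_eq_mul]
      exact_mod_cast h
    have h1m : 1 / (∏ i ∈ Iᶜ, (a i : ℚ)) ≤ 1 / 2 := by
      apply one_div_le_one_div_of_le (by norm_num) hm2
    have hinnerpos : (0:ℚ) ≤ (∑ i ∈ I, (a i : ℚ)) / (∏ i ∈ I, (a i : ℚ)) + ((I.card : ℚ) - 3) := by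
      have := div_pos hSpos hPpos
      linarith
    calc (1 / ∏ i ∈ Iᶜ, (a i : ℚ)) *
          ((∑ i ∈ I, (a i : ℚ)) / (∏ i ∈ I, (a i : ℚ)) + ((I.card : ℚ) - 3))
        ≤ (1/2) * ((∑ i ∈ I, (a i : ℚ)) / (∏ i ∈ I, (a i : ℚ)) + ((I.card : ℚ) - 3)) :=
          mul_le_mul_of_nonneg_right h1m hinnerpos
      _ ≤ 3 * (n : ℚ) / 2 - 1 := by linarith
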